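/- arXiv:2403.04512 — 5 statements merged into one kernel-verified Lean document; each statement's English description precedes it below -/
import Mathlib

section
/- If the w-stable set of a binary relation R on X is non-empty, then there exists a compact topology τ on X such that R is generalized upper tc-semicontinuous (i.e., for every x ∈ X the set {y ∈ X | x P(R̄) y} is open). -/
def tc {X : Type*} (R : X → X → Prop) : X → X → Prop := Relation.TransGen R

def strictTC {X : Type*} (R : X → X → Prop) (x y : X) : Prop :=
  tc R x y ∧ ¬ tc R y x

def WStable {X : Type*} (R : X → X → Prop) (F : Set X) : Prop :=
  (∀ x ∈ F, ∀ y ∈ F, x ≠ y → ¬ tc R x y) ∧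
  (∀ x ∈ F, ∀ y ∉ F, tc R y x → tc R x y)

/-- If the `w`-stable set of `R` in `X` is non-empty, then there exists a compact
topology on `X` under which `R` is generalized upper tc-semicontinuous. -/
theorem exists_compact_topology_of_wStable {X : Type*} [Nonempty X] (R : X → X → Prop)
    (h : ∃ F : Set X, F.Nonempty ∧ WStable R F) :
    ∃ t : TopologicalSpace X, @CompactSpace X t ∧
      ∀ x : X, @IsOpen X t {y : X | strictTC R x y} := by
  obtain ⟨F, ⟨f₀, hf₀⟩, hst⟩ := h
  -- excluded set topology: open iff univ or disjoint from F
  let t : TopologicalSpace X :=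
    { IsOpen := fun U => U = Set.univ ∨ U ∩ F = ∅
      isOpen_univ := Or.inl rfl
      isOpen_inter := by
        rintro U V (rfl | hU) (rfl | hV)
        · exact Or.inl (by simp)
        · right; simp [hV]
        · right; simp only [Set.inter_univ]; exact hU
        · right
          rw [Set.inter_assoc]
          simp [hV]
      isOpen_sUnion := by
        intro S hS
        by_cases hu : Set.univ ∈ S
        · left
          apply Set.eq_univ_of_univ_subset
          exact Set.subset_sUnion_of_mem hu
        · right
          rw [Set.eq_empty_iff_forall_notMem]
          rintro y ⟨⟨V, hV, hyV⟩, hyF⟩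
          rcases hS V hV with rfl | hVe
          · exact absurd hV hu
          · exact Set.eq_empty_iff_forall_notMem.mp hVe y ⟨hyV, hyF⟩ }
  refine ⟨t, ?_, ?_⟩
  · constructor
    rw [isCompact_iff_finite_subcover]
    intro ι U hU hcov
    have hf : f₀ ∈ ⋃ i, U i := hcov (Set.mem_univ f₀)
    obtain ⟨i, hi⟩ := Set.mem_iUnion.mp hf
    refine ⟨{i}, ?_⟩
    rcases hU i with hUe | hUe
    · simp [hUe]
    · exact absurd (Set.eq_empty_iff_forall_notMem.mp hUe f₀ ⟨hi, hf₀⟩) (fun h => h)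
  · intro x
    right
    rw [Set.eq_empty_iff_forall_notMem]
    rintro y ⟨⟨hxy, hnyx⟩, hyF⟩
    by_cases hxF : x ∈ F
    · rcases eq_or_ne x y with rfl | hne
      · exact hnyx hxy
      · exact hst.1 x hxF y hyF hne hxy
    · exact hnyx (hst.2 y hyF x hxF hxy)
end

section
/- If (X,τ) is a compact topological space and R is a binary relation on X that is generalized upper tc-semicontinuous, then there exists a non-empty w-stable set of (X,R); moreover, there exists x₀ ∈ X such that {x₀} satisfies the w-stable conditions. -/
lemma strictTC_trans {X : Type*} (R : X → X → Prop) {a b c : X}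
    (h1 : strictTC R a b) (h2 : strictTC R b c) : strictTC R a c := by
  refine ⟨h1.1.trans h2.1, fun hca => h2.2 (hca.trans h1.1)⟩

lemma strictTC_irrefl {X : Type*} (R : X → X → Prop) (a : X) : ¬ strictTC R a a :=
  fun h => h.2 h.1

/-- On a nonempty compact space, a generalized upper tc-semicontinuous relation has a
non-empty `w`-stable set; in fact some singleton `{x₀}` is a `w`-stable set. -/
theorem exists_singleton_wStable_of_compact {X : Type*} [TopologicalSpace X]
    [CompactSpace X] [Nonempty X] (R : X → X → Prop)
    (h : ∀ x : X, IsOpen {y : X | strictTC R x y}) :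
    ∃ x₀ : X, WStable R {x₀} := by
  suffices hmax : ∃ x₀ : X, ∀ y : X, ¬ strictTC R y x₀ by
    obtain ⟨x₀, hx₀⟩ := hmax
    refine ⟨x₀, ?_, ?_⟩
    · rintro x rfl y rfl hxy
      exact absurd rfl hxy
    · rintro x rfl y _ hyx
      by_contra hxy
      exact hx₀ y ⟨hyx, hxy⟩
  by_contra hno
  push_neg at hno
  -- every point is strictly dominated; cover X by open upper sections
  have hcover : (Set.univ : Set X) ⊆ ⋃ y : X, {x : X | strictTC R y x} := by
    intro x _
    obtain ⟨y, hy⟩ := hno x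
    exact Set.mem_iUnion.2 ⟨y, hy⟩
  obtain ⟨t, ht⟩ := isCompact_univ.elim_finite_subcover
    (fun y : X => {x : X | strictTC R y x}) h hcover
  -- every x has a strict dominator inside t
  have hdom : ∀ x : X, ∃ y ∈ t, strictTC R y x := by
    intro x
    have := ht (Set.mem_univ x)
    simpa using this
  -- the relation strictTC on the finite type t is transitive and irreflexive,
  -- hence well-founded; a minimal element has no dominator in t, contradiction
  obtain ⟨x⟩ := ‹Nonempty X›
  obtain ⟨y₀, hy₀, _⟩ := hdom x
  let r : {a // a ∈ t} → {a // a ∈ t} → Prop := fun a b => strictTC R a.1 b.1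
  haveI : IsTrans {a // a ∈ t} r := ⟨fun a b c hab hbc => strictTC_trans R hab hbc⟩
  haveI : IsIrrefl {a // a ∈ t} r := ⟨fun a => strictTC_irrefl R a.1⟩
  have wf : WellFounded r := Finite.wellFounded_of_trans_of_irrefl r
  obtain ⟨m, _, hmmin⟩ := wf.has_min Set.univ ⟨⟨y₀, hy₀⟩, Set.mem_univ _⟩
  obtain ⟨z, hz, hzm⟩ := hdom m.1
  exact hmmin ⟨z, hz⟩ (Set.mem_univ _) hzm
end

section
/- If X is covered by finitely many sets of the form {x | y_i P(R̄) x}, i = 1,...,n, then there exists a P(R̄)-cycle among {y₁,...,y_n}; hence such a finite cover cannot exist, since P(R̄) is acyclic. -/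
/-- `X` cannot be covered by finitely many sets of the form `{x | yᵢ P(R̄) x}`:
such a cover would produce a `P(R̄)`-cycle among `y₁, ..., yₙ`, contradicting
acyclicity of `P(R̄)`. -/
theorem no_finite_strict_cover {X : Type*} (R : X → X → Prop) :
    ∀ (n : ℕ) (y : Fin (n + 1) → X),
      ¬ (∀ x : X, ∃ i : Fin (n + 1), strictTC R (y i) x) := by
  intro n y h
  -- choose a predecessor function on indices
  have hf : ∀ j : Fin (n + 1), ∃ i, strictTC R (y i) (y j) := fun j => h (y j)
  choose f hS using hf
  -- iterating f strictly descends
  have chain : ∀ (m : ℕ) (j : Fin (n + 1)), strictTC R (y (f^[m + 1] j)) (y j) := by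
    intro m
    induction m with
    | zero => intro j; simpa using hS j
    | succ k ih =>
        intro j
        have h1 : strictTC R (y (f^[k + 1 + 1] j)) (y (f j)) := by
          have := ih (f j)
          simpa [Function.iterate_succ_apply] using this
        exact strictTC_trans R h1 (hS j)
  -- pigeonhole: iterates repeat
  have hnotinj : ¬ Function.Injective (fun m : Fin (n + 2) => f^[(m : ℕ)] 0) := by
    intro hinj
    have := Fintype.card_le_of_injective _ hinj
    simp at this
  rw [Function.not_injective_iff] at hnotinj
  obtain ⟨a, b, hab, hne⟩ := hnotinj
  wlog hlt : (b : ℕ) < (a : ℕ) generalizing a b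
  · exact this b a hab.symm (Ne.symm hne)
      (lt_of_le_of_ne (not_lt.mp hlt) (fun hh => hne (Fin.ext hh)))
  obtain ⟨k, hk⟩ := Nat.exists_eq_add_of_lt hlt
  have hcyc : strictTC R (y (f^[(a : ℕ)] 0)) (y (f^[(b : ℕ)] 0)) := by
    have := chain k (f^[(b : ℕ)] 0)
    rwa [← Function.iterate_add_apply, show k + 1 + (b : ℕ) = (a : ℕ) by omega] at this
  rw [hab] at hcyc
  exact hcyc.2 hcyc.1
end

section
/- Let (X,τ) be a compact topological space and R an upper tc-semicontinuous binary relation on X. Then (X,R) has a non-empty w-stable set; in fact, there exists x₀ ∈ X such that {x₀} is a w-stable set. -/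
/-- A finite nonempty set has a maximal element w.r.t. an irreflexive transitive relation. -/
lemma finset_exists_maximal {X : Type*} (P : X → X → Prop)
    (hirr : ∀ x, ¬ P x x) (htrans : ∀ {a b c}, P a b → P b c → P a c)
    (t : Finset X) (ht : t.Nonempty) : ∃ c ∈ t, ∀ d ∈ t, ¬ P d c := by
  classical
  induction t using Finset.induction_on with
  | empty => exact absurd ht (by simp)
  | @insert a s ha ih =>
    rcases s.eq_empty_or_nonempty with rfl | hs
    · exact ⟨a, by simp, by simpa using hirr a⟩
    · obtain ⟨c, hc, hmax⟩ := ih hs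
      by_cases hac : P a c
      · refine ⟨a, Finset.mem_insert_self _ _, ?_⟩
        intro d hd hda
        rcases Finset.mem_insert.mp hd with rfl | hd
        · exact hirr d hda
        · exact hmax d hd (htrans hda hac)
      · refine ⟨c, Finset.mem_insert_of_mem hc, ?_⟩
        intro d hd hdc
        rcases Finset.mem_insert.mp hd with rfl | hd
        · exact hac hdc
        · exact hmax d hd hdc

/-- On a nonempty compact space, an upper tc-semicontinuous relation has a non-empty
`w`-stable set; in fact some singleton `{x₀}` is a `w`-stable set. -/
theorem exists_singleton_wStable_of_tc_usc {X : Type*} [TopologicalSpace X]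
    [CompactSpace X] [Nonempty X] (R : X → X → Prop)
    (h : ∀ x : X, IsOpen {y : X | tc R x y}) :
    ∃ x₀ : X, WStable R {x₀} := by
  -- it suffices to find an R̄-maximal element
  suffices hmax : ∃ x₀ : X, ∀ y : X, tc R y x₀ → tc R x₀ y by
    obtain ⟨x₀, hx₀⟩ := hmax
    refine ⟨x₀, ?_, ?_⟩
    · intro x hx y hy hxy
      simp only [Set.mem_singleton_iff] at hx hy
      exact absurd (hx.trans hy.symm) hxy
    · intro x hx y _ hyx
      simp only [Set.mem_singleton_iff] at hx
      subst hx
      exact hx₀ y hyx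
  by_contra hno
  push_neg at hno
  -- every x is strictly dominated by some y; the open sets {z | tc R y z} cover X
  have hcover : (Set.univ : Set X) ⊆ ⋃ y : X, {z : X | tc R y z} := by
    intro x _
    obtain ⟨y, hyx, hxy⟩ := hno x
    exact Set.mem_iUnion.mpr ⟨y, hyx⟩
  obtain ⟨t, ht⟩ := isCompact_univ.elim_finite_subcover _ (fun y => h y) hcover
  have htne : t.Nonempty := by
    obtain ⟨x⟩ := ‹Nonempty X›
    obtain ⟨y, hy, _⟩ := Set.mem_iUnion₂.mp (ht (Set.mem_univ x))
    exact ⟨y, hy⟩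
  -- strict dominance relation
  set P : X → X → Prop := fun a b => tc R a b ∧ ¬ tc R b a with hP
  have hirr : ∀ x, ¬ P x x := fun x hx => hx.2 hx.1
  have htrans : ∀ {a b c}, P a b → P b c → P a c := by
    intro a b c hab hbc
    refine ⟨hab.1.trans hbc.1, fun hca => hbc.2 (hca.trans hab.1)⟩
  obtain ⟨c, hc, hcmax⟩ := finset_exists_maximal P hirr htrans t htne
  -- c is not maximal in X, so some y strictly dominates it
  obtain ⟨y, hyc, hcy⟩ := hno c
  -- y is covered by some k ∈ t
  obtain ⟨k, hk, hky⟩ := Set.mem_iUnion₂.mp (ht (Set.mem_univ y))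
  have hky' : tc R k y := hky
  have hkc : tc R k c := hky'.trans hyc
  have hck : tc R c k := by
    by_contra hck
    exact hcmax k hk ⟨hkc, hck⟩
  exact hcy (hck.trans hky')
end

section
/- If W is a w-stable set of (X,R) and x₀ ∈ W is not R̄-maximal, witnessed by some y with y R̄ x₀, then x₀ R̄ y and any ⊆-maximal R-cycle Ĉ containing {x₀, y} is R̃-maximal in the contraction: there is no strong component C' ∉ {Ĉ} with C' R̃ Ĉ. -/
/-- The strong component of `x`: all `y` with `x = y` or `x R̄ y` and `y R̄ x`. -/
def strongComp {X : Type*} (R : X → X → Prop) (x : X) : Set X :=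
  {y : X | x = y ∨ (tc R x y ∧ tc R y x)}

/-- The ground sets of the strong components of `(X, R)`. -/
def components {X : Type*} (R : X → X → Prop) : Set (Set X) :=
  {C | ∃ x : X, C = strongComp R x}

/-- The contraction relation `R̃` on strong components: `C R̃ C'` iff the components are
distinct and some element of `C` is `R`-related to some element of `C'`. -/
def contractRel {X : Type*} (R : X → X → Prop) (C C' : Set X) : Prop :=
  C ≠ C' ∧ ∃ x ∈ C, ∃ y ∈ C', R x y

/-- A strong component `C` is `R̃`-maximal: no other component dominates it via the
transitive closure of `R̃` without `C` reaching back. -/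
def MaximalComp {X : Type*} (R : X → X → Prop) (C : Set X) : Prop :=
  C ∈ components R ∧
  ¬ ∃ C' ∈ components R, C' ≠ C ∧ Relation.TransGen (contractRel R) C' C ∧
    ¬ Relation.TransGen (contractRel R) C C'

/-- An `R`-cycle: a set all of whose elements are mutually related by `R̄`. -/
def IsRCycle {X : Type*} (R : X → X → Prop) (Y : Set X) : Prop :=
  ∀ x ∈ Y, ∀ y ∈ Y, tc R x y ∧ tc R y x

/-- If `W` is `w`-stable, `x₀ ∈ W` is not `R̄`-maximal as witnessed by `y R̄ x₀`, then
`x₀ R̄ y`, and any `⊆`-maximal `R`-cycle `Ĉ` containing `{x₀, y}` is `R̃`-maximal in the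
contraction: no strong component `C' ≠ Ĉ` satisfies `C' R̃ Ĉ`. -/
theorem maximal_cycle_of_wStable {X : Type*} (R : X → X → Prop) (W : Set X)
    (hW : WStable R W) {x₀ y : X} (hx₀ : x₀ ∈ W) (hy : tc R y x₀) :
    tc R x₀ y ∧
    ∀ C : Set X, IsRCycle R C → x₀ ∈ C → y ∈ C →
      (∀ Y : Set X, IsRCycle R Y → C ⊆ Y → Y = C) →
      ¬ ∃ C' ∈ components R, C' ≠ C ∧ contractRel R C' C := by
  obtain ⟨h1, h2⟩ := hW
  have hx0y : tc R x₀ y := by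
    by_cases hyW : y ∈ W
    · by_cases hyx : y = x₀
      · subst hyx; exact hy
      · exact absurd hy (h1 y hyW x₀ hx₀ hyx)
    · exact h2 x₀ hx₀ y hyW hy
  refine ⟨hx0y, ?_⟩
  rintro C hC hx0C hyC hmax ⟨C', hC'comp, hne, hCC, t, htC', s, hsC, hts⟩
  obtain ⟨z, rfl⟩ := hC'comp
  have key : ∀ u, tc R x₀ u → tc R u x₀ → u ∈ C := by
    intro u h1u h2u
    have hcyc : IsRCycle R (C ∪ {u}) := by
      rintro a (ha | rfl) b (hb | rfl)
      · exact hC a ha b hb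
      · exact ⟨((hC a ha x₀ hx0C).1).trans h1u, h2u.trans (hC x₀ hx0C a ha).1⟩
      · exact ⟨h2u.trans (hC x₀ hx0C b hb).1, ((hC b hb x₀ hx0C).1).trans h1u⟩
      · exact ⟨h2u.trans h1u, h2u.trans h1u⟩
    have := hmax _ hcyc Set.subset_union_left
    rw [← this]; exact Or.inr rfl
  have htx0 : tc R t x₀ := (Relation.TransGen.single hts).trans (hC s hsC x₀ hx0C).1
  have hx0t : tc R x₀ t := by
    by_cases htW : t ∈ W
    · by_cases htx : t = x₀
      · subst htx; exact htx0
      · exact absurd htx0 (h1 t htW x₀ hx₀ htx)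
    · exact h2 x₀ hx₀ t htW htx0
  have htC : t ∈ C := key t hx0t htx0
  apply hne
  have hut : ∀ u ∈ strongComp R z, u = t ∨ (tc R t u ∧ tc R u t) := by
    intro u hu
    rcases hu with rfl | ⟨hzu, huz⟩
    · rcases htC' with rfl | ⟨hzt, htz⟩
      · exact Or.inl rfl
      · exact Or.inr ⟨htz, hzt⟩
    · rcases htC' with rfl | ⟨hzt, htz⟩
      · exact Or.inr ⟨hzu, huz⟩
      · exact Or.inr ⟨htz.trans hzu, huz.trans hzt⟩
  have hsub : strongComp R z ⊆ C := by
    intro u hu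
    rcases hut u hu with rfl | ⟨htu, hut'⟩
    · exact htC
    · exact key u ((hC x₀ hx0C t htC).1.trans htu) (hut'.trans (hC t htC x₀ hx0C).1)
  have hzC : z ∈ C := hsub (Or.inl rfl)
  refine Set.Subset.antisymm hsub fun c hc => ?_
  exact Or.inr ⟨(hC z hzC c hc).1, (hC c hc z hzC).1⟩
end
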